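/- arXiv:1608.07625 — 5 statements merged into one kernel-verified Lean document; each statement's English description precedes it below -/
import Mathlib

section
/- Suppose the SD algorithm assigns to each point separated at a split in dimension a a strictly smaller block of grid positions in dimension a for the left group than for the right group (left group gets positions with a-th coordinate < c, right group gets positions with a-th coordinate ≥ c for some threshold c). Then for any pair p, q separated at that split with p in the left group, the final placement satisfies S(p)_a < S(q)_a. Consequently, for each point p, the number of type-I constraints involving p that are satisfied is at least n - 1. -/
/-!
Every other point `j` is separated from `i` at some split, and in that split's dimension the
blocks put `i` and `j` in the order of their coordinates; the pairs `(j, d i j)` are distinct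
for distinct `j`, which gives `n - 1` satisfied constraints.
-/

open Finset

def TypeIConstraint {ι κ α β : Type*} [LT α] [LT β] (x : ι → κ → α) (S : ι → κ → β)
    (i j : ι) (a : κ) : Prop :=
  (x i a < x j a → S i a < S j a) ∧ (x j a < x i a → S j a < S i a)

instance {ι κ α β : Type*} [LT α] [LT β] [DecidableLT α] [DecidableLT β] (x : ι → κ → α)
    (S : ι → κ → β) (i j : ι) (a : κ) : Decidable (TypeIConstraint x S i j a) :=
  inferInstanceAs (Decidable (_ ∧ _))

theorem typeIConstraint_of_split {ι κ α β : Type*} [LinearOrder α] [Preorder β]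
    {x : ι → κ → α} {S : ι → κ → β} {i j : ι} {a : κ} {t : β}
    (h : (x i a ≤ x j a ∧ S i a < t ∧ t ≤ S j a) ∨ (x j a ≤ x i a ∧ S j a < t ∧ t ≤ S i a)) :
    TypeIConstraint x S i j a := by
  rcases h with ⟨hx, hi, hj⟩ | ⟨hx, hj, hi⟩
  · exact ⟨fun _ => hi.trans_le hj, fun hlt => absurd hx hlt.not_ge⟩
  · exact ⟨fun hlt => absurd hx hlt.not_ge, fun _ => hj.trans_le hi⟩

theorem card_sub_one_le_card_filter_pairs {ι κ : Type*} [Fintype ι] [DecidableEq ι] [Fintype κ]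
    (P : ι × κ → Prop) [DecidablePred P] (i : ι) (hP : ∀ j, j ≠ i → ∃ l, P (j, l)) :
    Fintype.card ι - 1 ≤ #(univ.filter fun jl : ι × κ => jl.1 ≠ i ∧ P jl) := by
  calc Fintype.card ι - 1 = #(univ.erase i) := by rw [card_erase_of_mem (mem_univ i), card_univ]
    _ ≤ _ := card_le_card_of_surjOn Prod.fst fun j hj => by
      have hj : j ≠ i := ne_of_mem_erase hj
      obtain ⟨l, hl⟩ := hP j hj
      exact ⟨(j, l), by simpa using ⟨hj, hl⟩, rfl⟩

theorem sd_split_blocks_give_pointwise_guarantee_general (n k : ℕ)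
    (x : Fin n → Fin k → ℝ)      -- original coordinates
    (S : Fin n → Fin k → ℤ)      -- final grid placement
    (d : Fin n → Fin n → Fin k)  -- dimension of the split separating a pair
    (c : Fin n → Fin n → ℤ)      -- grid-index threshold of that split
    (hsplit : ∀ i j, i ≠ j →
      (x i (d i j) ≤ x j (d i j) ∧ S i (d i j) < c i j ∧ c i j ≤ S j (d i j)) ∨
      (x j (d i j) ≤ x i (d i j) ∧ S j (d i j) < c i j ∧ c i j ≤ S i (d i j))) :
    (∀ i j, i ≠ j → S i (d i j) < c i j → c i j ≤ S j (d i j) →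
        S i (d i j) < S j (d i j)) ∧
    (∀ i : Fin n, n - 1 ≤ (Finset.univ.filter
        (fun jl : Fin n × Fin k => jl.1 ≠ i ∧
          (x i jl.2 < x jl.1 jl.2 → S i jl.2 < S jl.1 jl.2) ∧
          (x jl.1 jl.2 < x i jl.2 → S jl.1 jl.2 < S i jl.2))).card) := by
  refine ⟨fun _ _ _ hi hj => hi.trans_le hj, fun i => ?_⟩
  have hsat : ∀ j, j ≠ i → TypeIConstraint x S i j (d i j) := fun j hj =>
    typeIConstraint_of_split (hsplit i j hj.symm)
  have hcount := card_sub_one_le_card_filter_pairs (fun jl => TypeIConstraint x S i jl.1 jl.2) i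
    fun j hj => ⟨d i j, hsat j hj⟩
  rw [Fintype.card_fin] at hcount
  exact hcount

/-- suppose each pair of distinct points `i, j` is separated at a split
in dimension `d i j` with threshold `c i j`, the point on the smaller-coordinate
side receiving grid indices `< c i j` in that dimension and the other point
receiving indices `≥ c i j`. Then for any separated pair the placement is strictly
ordered in the split dimension, and consequently for each point `p` at least
`n - 1` type-I constraints involving `p` are satisfied. -/
theorem sd_split_blocks_give_pointwise_guarantee (n k : ℕ)
    (x : Fin n → Fin k → ℝ)      -- original coordinates
    (S : Fin n → Fin k → ℤ)      -- final grid placement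
    (d : Fin n → Fin n → Fin k)  -- dimension of the split separating a pair
    (c : Fin n → Fin n → ℤ)      -- grid-index threshold of that split
    (hdsymm : ∀ i j, d i j = d j i) (hcsymm : ∀ i j, c i j = c j i)
    (hsplit : ∀ i j, i ≠ j →
      (x i (d i j) ≤ x j (d i j) ∧ S i (d i j) < c i j ∧ c i j ≤ S j (d i j)) ∨
      (x j (d i j) ≤ x i (d i j) ∧ S j (d i j) < c i j ∧ c i j ≤ S i (d i j))) :
    (∀ i j, i ≠ j → S i (d i j) < c i j → c i j ≤ S j (d i j) →
        S i (d i j) < S j (d i j)) ∧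
    (∀ i : Fin n, n - 1 ≤ (Finset.univ.filter
        (fun jl : Fin n × Fin k => jl.1 ≠ i ∧
          (x i jl.2 < x jl.1 jl.2 → S i jl.2 < S jl.1 jl.2) ∧
          (x jl.1 jl.2 < x i jl.2 → S jl.1 jl.2 < S i jl.2))).card) :=
  sd_split_blocks_give_pointwise_guarantee_general n k x S d c hsplit
end

section
/- In the SD placement over a grid of shape g_1 × ... × g_k, two distinct points are never assigned the same grid position; i.e., the placement map S is injective. -/
/-!
Every position produced by a run on the sub-grid with corner `c` and shape `g` lies in the box
`∏ i, [c i, c i + g i)`. At a split along axis `a` the two sub-runs live in boxes separated by the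
hyperplane `x a = c a + g a / 2`, so their positions are disjoint, and induction does the rest.
-/

/-- A valid execution of the split-diffuse recursion (see the SD algorithm):
points are recursively partitioned between two disjoint sub-grids until each
cell contains one point, which is placed at the single remaining position. -/
inductive SDRun (k : ℕ) :
    (Fin k → ℕ) → (Fin k → ℕ) → List (Fin k → ℝ) →
    List ((Fin k → ℝ) × (Fin k → ℕ)) → Prop where
  | single (g c : Fin k → ℕ) (hg : ∀ i, g i = 1) (p : Fin k → ℝ) :
      SDRun k g c [p] [(p, c)]
  | split (g c : Fin k → ℕ) (a : Fin k) (ha : 2 ≤ g a) (hmax : ∀ i, g i ≤ g a)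
      (pts q : List (Fin k → ℝ)) (hperm : q.Perm pts)
      (hsort : q.Pairwise (fun p r => p a ≤ r a))
      (outl outr : List ((Fin k → ℝ) × (Fin k → ℕ)))
      (hl : SDRun k (Function.update g a (g a / 2)) c
              (q.take ((g a / 2) * ∏ i ∈ Finset.univ.erase a, g i)) outl)
      (hr : SDRun k (Function.update g a (g a - g a / 2))
              (Function.update c a (c a + g a / 2))
              (q.drop ((g a / 2) * ∏ i ∈ Finset.univ.erase a, g i)) outr) :
      SDRun k g c pts (outl ++ outr)

namespace SDRun

variable {k : ℕ} {g c : Fin k → ℕ} {pts : List (Fin k → ℝ)}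
  {out : List ((Fin k → ℝ) × (Fin k → ℕ))}

theorem mem_Ico_of_mem (h : SDRun k g c pts out) {x : Fin k → ℕ} (hx : x ∈ out.map Prod.snd)
    (i : Fin k) : x i ∈ Set.Ico (c i) (c i + g i) := by
  induction h with
  | single g c hg p =>
    obtain rfl : x = c := by simpa using hx
    simp [hg i]
  | split g c a _ _ _ _ _ _ outl outr _ _ ihl ihr =>
    have half_le : g a / 2 ≤ g a := Nat.div_le_self _ _
    rw [List.map_append, List.mem_append] at hx
    rcases hx with hx | hx
    · have := ihl hx
      rcases eq_or_ne i a with rfl | hi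
      · simp only [Set.mem_Ico, Function.update_self] at this ⊢
        omega
      · simpa only [Function.update_of_ne hi] using this
    · have := ihr hx
      rcases eq_or_ne i a with rfl | hi
      · simp only [Set.mem_Ico, Function.update_self] at this ⊢
        omega
      · simpa only [Function.update_of_ne hi] using this

end SDRun

/-- in an SD placement, two distinct points are never assigned the
same grid position: the list of assigned positions has no duplicates, i.e. the
placement map is injective. -/
theorem sd_placement_injective (k : ℕ) (g c : Fin k → ℕ)
    (pts : List (Fin k → ℝ)) (out : List ((Fin k → ℝ) × (Fin k → ℕ)))
    (hrun : SDRun k g c pts out) :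
    (out.map Prod.snd).Nodup := by
  induction hrun with
  | single => simp
  | split g c a _ _ _ _ _ _ outl outr hl hr ihl ihr =>
    rw [List.map_append, List.nodup_append]
    refine ⟨ihl, ihr, fun x hxl y hyr hxy => ?_⟩
    subst hxy
    have left_half := (hl.mem_Ico_of_mem hxl a).2
    have right_half := (hr.mem_Ico_of_mem hyr a).1
    simp only [Function.update_self] at left_half right_half
    omega
end

section
/- The recursion depth of the SD algorithm on a grid with n = ∏ g_i cells, where each split halves the largest dimension (into floor and ceiling halves), is at most ⌈log2 g_1⌉ + ⌈log2 g_2⌉ + ... + ⌈log2 g_k⌉, and in particular at most ⌈log2 n⌉ + k. -/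
/-!
Each split replaces `g_a ≥ 2` by `⌊g_a/2⌋` or `⌈g_a/2⌉`, and `⌈log₂ ⌈g_a/2⌉⌉ = ⌈log₂ g_a⌉ - 1`,
so the potential `∑ᵢ ⌈log₂ gᵢ⌉` drops by at least one along every edge of the recursion tree.
For the second bound, `⌈log₂ m⌉ ≤ ⌊log₂ m⌋ + 1` and `⌊log₂⌋` is superadditive on products.
-/

/-- `RunDepth k g d`: an execution of the SD splitting process on a grid of shape
`g` (always halving a largest dimension into its floor and ceiling halves, until
all dimensions equal `1`) has recursion depth `d` (maximum number of splits along
a root-to-leaf path). -/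
inductive RunDepth (k : ℕ) : (Fin k → ℕ) → ℕ → Prop where
  | done (g : Fin k → ℕ) (h : ∀ i, g i = 1) : RunDepth k g 0
  | step (g : Fin k → ℕ) (a : Fin k) (dl dr : ℕ)
      (ha : 2 ≤ g a) (hmax : ∀ i, g i ≤ g a)
      (hl : RunDepth k (Function.update g a (g a / 2)) dl)
      (hr : RunDepth k (Function.update g a (g a - g a / 2)) dr) :
      RunDepth k g (max dl dr + 1)

namespace Nat

theorem clog_two_sub_half_add_one {n : ℕ} (hn : 2 ≤ n) :
    clog 2 (n - n / 2) + 1 = clog 2 n := by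
  rw [clog_of_two_le one_lt_two hn]
  congr 2
  omega

theorem clog_two_half_add_one_le {n : ℕ} (hn : 2 ≤ n) : clog 2 (n / 2) + 1 ≤ clog 2 n :=
  calc clog 2 (n / 2) + 1 ≤ clog 2 (n - n / 2) + 1 := by gcongr; omega
    _ = clog 2 n := clog_two_sub_half_add_one hn

theorem clog_le_log_add_one {b : ℕ} (hb : 1 < b) (n : ℕ) : clog b n ≤ log b n + 1 :=
  clog_le_of_le_pow (lt_pow_succ_log_self hb n).le

theorem log_add_log_le_log_mul {b m n : ℕ} (hb : 1 < b) (hm : m ≠ 0) (hn : n ≠ 0) :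
    log b m + log b n ≤ log b (m * n) :=
  le_log_of_pow_le hb <| by
    rw [pow_add]
    exact Nat.mul_le_mul (pow_log_le_self b hm) (pow_log_le_self b hn)

theorem sum_log_le_log_prod {ι : Type*} {b : ℕ} (hb : 1 < b) (s : Finset ι) {g : ι → ℕ}
    (hg : ∀ i ∈ s, g i ≠ 0) : ∑ i ∈ s, log b (g i) ≤ log b (∏ i ∈ s, g i) := by
  classical
  induction s using Finset.induction_on with
  | empty => simp
  | insert a s ha ih =>
    rw [Finset.sum_insert ha, Finset.prod_insert ha]
    have hs : ∀ i ∈ s, g i ≠ 0 := fun i hi => hg i (Finset.mem_insert_of_mem hi)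
    calc log b (g a) + ∑ i ∈ s, log b (g i) ≤ log b (g a) + log b (∏ i ∈ s, g i) := by
          gcongr; exact ih hs
      _ ≤ log b (g a * ∏ i ∈ s, g i) :=
          log_add_log_le_log_mul hb (hg a (Finset.mem_insert_self a s))
            (Finset.prod_ne_zero_iff.2 hs)

end Nat

theorem Fintype.sum_apply_update_lt_sum {ι α M : Type*} [Fintype ι] [DecidableEq ι]
    [AddCommMonoid M] [PartialOrder M] [IsOrderedCancelAddMonoid M] (F : α → M) (g : ι → α)
    (a : ι) (v : α) (h : F v < F (g a)) : ∑ i, F (Function.update g a v i) < ∑ i, F (g i) := by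
  refine Finset.sum_lt_sum (fun i _ => ?_) ⟨a, Finset.mem_univ a, by simpa using h⟩
  rcases eq_or_ne i a with rfl | hi
  · simpa using h.le
  · simp [hi]

theorem RunDepth.le_sum_clog {k : ℕ} {g : Fin k → ℕ} {d : ℕ} (hd : RunDepth k g d) :
    d ≤ ∑ i, Nat.clog 2 (g i) := by
  induction hd with
  | done => exact Nat.zero_le _
  | step g a dl dr ha _ _ _ ihl ihr =>
    have hl := Fintype.sum_apply_update_lt_sum (Nat.clog 2) g a (g a / 2)
      (Nat.clog_two_half_add_one_le ha)
    have hr := Fintype.sum_apply_update_lt_sum (Nat.clog 2) g a (g a - g a / 2)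
      (Nat.clog_two_sub_half_add_one ha).le
    omega

/-- the recursion depth of the SD algorithm on a grid of shape
`g₁ × ⋯ × g_k` is at most `⌈log₂ g₁⌉ + ⋯ + ⌈log₂ g_k⌉`, and in particular at
most `⌈log₂ n⌉ + k` where `n = ∏ gᵢ`. -/
theorem sd_recursion_depth_bound (k : ℕ) (g : Fin k → ℕ) (hg : ∀ i, 1 ≤ g i)
    (d : ℕ) (hd : RunDepth k g d) :
    d ≤ ∑ i, Nat.clog 2 (g i) ∧ d ≤ Nat.clog 2 (∏ i, g i) + k := by
  have hsum := hd.le_sum_clog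
  refine ⟨hsum, hsum.trans ?_⟩
  calc ∑ i, Nat.clog 2 (g i) ≤ ∑ i, (Nat.log 2 (g i) + 1) :=
        Finset.sum_le_sum fun i _ => Nat.clog_le_log_add_one one_lt_two (g i)
    _ = ∑ i, Nat.log 2 (g i) + k := by simp [Finset.sum_add_distrib]
    _ ≤ Nat.log 2 (∏ i, g i) + k := by
        gcongr
        exact Nat.sum_log_le_log_prod one_lt_two _ fun i _ => Nat.one_le_iff_ne_zero.1 (hg i)
    _ ≤ Nat.clog 2 (∏ i, g i) + k := by gcongr; exact Nat.log_le_clog 2 _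
end

section
/- Consider the SD placement on an m × m grid of n = m² points whose coordinates in the split dimension at every split are all distinct. Then for every pair of points separated by a split in dimension a, the type-I constraint in dimension a holds for that pair. Consequently the number of violated type-I constraints is at most C(n,2) (only the constraints in the non-splitting dimension of each pair's separating split can be violated), giving Err_I ≤ 1/2. -/
/-!
The split separating `i` and `j` sends the point with the smaller coordinate in the split
dimension strictly below the grid threshold and the other one to or above it, so the grid
indices in that dimension respect the order of the coordinates. Hence each pair `i < j` can
violate its type-I constraint in at most the one remaining dimension, which bounds the
violations by the `C(n, 2)` pairs out of `2 C(n, 2)` constraints.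
-/

open Finset

/-- The type-I constraint of the pair `(i, j)` in dimension `a`. -/
def TypeIHolds {ι κ α β : Type*} [LinearOrder α] [Preorder β]
    (x : ι → κ → α) (S : ι → κ → β) (i j : ι) (a : κ) : Prop :=
  (x i a < x j a → S i a < S j a) ∧ (x j a ≤ x i a → S j a ≤ S i a)

instance {ι κ α β : Type*} [LinearOrder α] [Preorder β] [DecidableLT β] [DecidableLE β]
    (x : ι → κ → α) (S : ι → κ → β) (i j : ι) (a : κ) :
    Decidable (TypeIHolds x S i j a) :=
  inferInstanceAs (Decidable (_ ∧ _))

theorem typeIHolds_of_split {ι κ α β : Type*} [LinearOrder α] [Preorder β]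
    {x : ι → κ → α} {S : ι → κ → β} {d : ι → ι → κ} {c : ι → ι → β}
    (hdsymm : ∀ i j, d i j = d j i)
    (hdist : ∀ i j, i ≠ j → x i (d i j) ≠ x j (d i j))
    (hsplit : ∀ i j, i ≠ j → x i (d i j) < x j (d i j) →
      S i (d i j) < c i j ∧ c i j ≤ S j (d i j))
    {i j : ι} (hij : i ≠ j) : TypeIHolds x S i j (d i j) := by
  refine ⟨fun hlt => (hsplit i j hij hlt).1.trans_le (hsplit i j hij hlt).2, fun hle => ?_⟩
  have hlt : x j (d j i) < x i (d j i) := by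
    rw [← hdsymm]
    exact hle.lt_of_ne (hdist i j hij).symm
  have h := hsplit j i hij.symm hlt
  rw [← hdsymm] at h
  exact (h.1.trans_le h.2).le

theorem card_filter_lt_and_not_le_mul_choose_two {ι κ : Type*} [Fintype ι] [LinearOrder ι]
    [Fintype κ] [DecidableEq κ] (P : ι → ι → κ → Prop) [∀ i j a, Decidable (P i j a)]
    (d : ι → ι → κ)
    (hP : ∀ i j, i < j → P i j (d i j)) :
    #{t : ι × ι × κ | t.1 < t.2.1 ∧ ¬ P t.1 t.2.1 t.2.2}
      ≤ (Fintype.card κ - 1) * (Fintype.card ι).choose 2 := by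
  rw [← Fintype.card_product_filter_lt]
  refine card_le_mul_card_image_of_maps_to (f := fun t => (t.1, t.2.1)) ?_ _ ?_
  · intro t ht
    simp only [mem_filter, mem_univ, true_and] at ht ⊢
    exact ht.1
  · rintro ⟨i, j⟩ hij
    simp only [mem_filter, mem_univ, true_and] at hij
    calc #{t ∈ ({t : ι × ι × κ | t.1 < t.2.1 ∧ ¬ P t.1 t.2.1 t.2.2} : Finset _) |
            (t.1, t.2.1) = (i, j)}
        ≤ #((univ : Finset κ).erase (d i j)) := by
          refine card_le_card_of_injOn (fun t => t.2.2) ?_ ?_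
          · rintro ⟨i', j', a⟩ ht
            simp only [coe_filter, mem_filter, mem_univ, true_and, Prod.mk.injEq,
              Set.mem_ofPred_eq] at ht
            obtain ⟨⟨-, hfail⟩, rfl, rfl⟩ := ht
            simp only [coe_erase, coe_univ, Set.mem_sdiff, Set.mem_univ, Set.mem_singleton_iff,
              true_and]
            rintro rfl
            exact hfail (hP _ _ hij)
          · rintro ⟨i₁, j₁, a₁⟩ h₁ ⟨i₂, j₂, a₂⟩ h₂ (rfl : a₁ = a₂)
            simp only [coe_filter, mem_filter, mem_univ, true_and, Prod.mk.injEq,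
              Set.mem_ofPred_eq] at h₁ h₂
            obtain ⟨-, rfl, rfl⟩ := h₁
            obtain ⟨-, rfl, rfl⟩ := h₂
            rfl
      _ = Fintype.card κ - 1 := by rw [card_erase_of_mem (mem_univ _), card_univ]

theorem div_two_mul_le_half {K : Type*} [Field K] [LinearOrder K] [IsStrictOrderedRing K]
    {a b : K} (hb : 0 ≤ b) (hab : a ≤ b) : a / (2 * b) ≤ 1 / 2 :=
  div_le_of_le_mul₀ (by positivity) (by norm_num) (by linarith)

theorem sd_grid_errI_le_half_general (n : ℕ)
    (x : Fin n → Fin 2 → ℝ) (S : Fin n → Fin 2 → ℤ)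
    (d : Fin n → Fin n → Fin 2) (c : Fin n → Fin n → ℤ)
    (hdsymm : ∀ i j, d i j = d j i)
    (hdist : ∀ i j, i ≠ j → x i (d i j) ≠ x j (d i j))
    (hsplit : ∀ i j, i ≠ j → x i (d i j) < x j (d i j) →
      S i (d i j) < c i j ∧ c i j ≤ S j (d i j)) :
    (∀ i j, i ≠ j →
      ((x i (d i j) < x j (d i j) → S i (d i j) < S j (d i j)) ∧
       (x j (d i j) ≤ x i (d i j) → S j (d i j) ≤ S i (d i j)))) ∧
    (Finset.univ.filter (fun t : Fin n × Fin n × Fin 2 =>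
        t.1 < t.2.1 ∧
        ¬ ((x t.1 t.2.2 < x t.2.1 t.2.2 → S t.1 t.2.2 < S t.2.1 t.2.2) ∧
           (x t.2.1 t.2.2 ≤ x t.1 t.2.2 → S t.2.1 t.2.2 ≤ S t.1 t.2.2)))).card
      ≤ n.choose 2 ∧
    ((Finset.univ.filter (fun t : Fin n × Fin n × Fin 2 =>
        t.1 < t.2.1 ∧
        ¬ ((x t.1 t.2.2 < x t.2.1 t.2.2 → S t.1 t.2.2 < S t.2.1 t.2.2) ∧
           (x t.2.1 t.2.2 ≤ x t.1 t.2.2 → S t.2.1 t.2.2 ≤ S t.1 t.2.2)))).card : ℚ)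
        / (2 * n.choose 2) ≤ 1 / 2 := by
  have htypeI : ∀ i j, i ≠ j → TypeIHolds x S i j (d i j) := fun i j hij =>
    typeIHolds_of_split hdsymm hdist hsplit hij
  have hcard := card_filter_lt_and_not_le_mul_choose_two (TypeIHolds x S) d
    fun i j hij => htypeI i j hij.ne
  simp only [Fintype.card_fin, Nat.add_one_sub_one, one_mul] at hcard
  exact ⟨htypeI, hcard, div_two_mul_le_half (Nat.cast_nonneg _) (by exact_mod_cast hcard)⟩

/-- SD placement of `n = m²` points on an `m × m` grid, with the
coordinates in the split dimension distinct at every split. Each pair `i ≠ j`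
is separated by exactly one split, in dimension `d i j`, with grid-index
threshold `c i j`, the smaller-coordinate point getting indices `< c i j` and
the other `≥ c i j` in that dimension. Then the type-I constraint in the
separating dimension holds for every pair; consequently at most `C(n,2)`
type-I constraints are violated, giving `Err_I ≤ 1/2`. -/
theorem sd_grid_errI_le_half (m : ℕ) (n : ℕ) (hn : n = m ^ 2)
    (x : Fin n → Fin 2 → ℝ) (S : Fin n → Fin 2 → ℤ)
    (d : Fin n → Fin n → Fin 2) (c : Fin n → Fin n → ℤ)
    (hdsymm : ∀ i j, d i j = d j i) (hcsymm : ∀ i j, c i j = c j i)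
    (hdist : ∀ i j, i ≠ j → x i (d i j) ≠ x j (d i j))
    (hsplit : ∀ i j, i ≠ j → x i (d i j) < x j (d i j) →
      S i (d i j) < c i j ∧ c i j ≤ S j (d i j)) :
    (∀ i j, i ≠ j →
      ((x i (d i j) < x j (d i j) → S i (d i j) < S j (d i j)) ∧
       (x j (d i j) ≤ x i (d i j) → S j (d i j) ≤ S i (d i j)))) ∧
    (Finset.univ.filter (fun t : Fin n × Fin n × Fin 2 =>
        t.1 < t.2.1 ∧
        ¬ ((x t.1 t.2.2 < x t.2.1 t.2.2 → S t.1 t.2.2 < S t.2.1 t.2.2) ∧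
           (x t.2.1 t.2.2 ≤ x t.1 t.2.2 → S t.2.1 t.2.2 ≤ S t.1 t.2.2)))).card
      ≤ n.choose 2 ∧
    ((Finset.univ.filter (fun t : Fin n × Fin n × Fin 2 =>
        t.1 < t.2.1 ∧
        ¬ ((x t.1 t.2.2 < x t.2.1 t.2.2 → S t.1 t.2.2 < S t.2.1 t.2.2) ∧
           (x t.2.1 t.2.2 ≤ x t.1 t.2.2 → S t.2.1 t.2.2 ≤ S t.1 t.2.2)))).card : ℚ)
        / (2 * n.choose 2) ≤ 1 / 2 :=
  sd_grid_errI_le_half_general n x S d c hdsymm hdist hsplit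
end

section
/- If a placement S : {1,...,n} → Z^k satisfies, for each pair (i,j), the type-I constraint in at least the single dimension of the split separating them, and the separating-split dimensions are distributed so that each dimension separates at least one pair, then Err_I ≤ (k-1)/k with equality achievable: there exists an instance (n points and a valid SD execution) where exactly C(n,2) constraints are satisfied. -/
lemma sd_pair_count (n : ℕ) :
    (Finset.univ.filter (fun p : Fin n × Fin n => p.1 < p.2)).card = n.choose 2 := by
  rw [Finset.card_filter, Fintype.sum_prod_type_right]
  have h1 : ∀ j : Fin n, (∑ i : Fin n, if i < j then 1 else 0) = (j : ℕ) := by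
    intro j
    rw [← Finset.card_filter]
    have : Finset.univ.filter (fun i : Fin n => i < j) = Finset.Iio j := by
      ext i; simp
    rw [this, Fin.card_Iio]
  simp_rw [h1]
  rw [Fin.sum_univ_eq_sum_range (fun i => i) n, Finset.sum_range_id, Nat.choose_two_right]

lemma sd_T_count (n k : ℕ) (d : Fin n → Fin n → Fin k) :
    (Finset.univ.filter (fun t : Fin n × Fin n × Fin k =>
      t.1 < t.2.1 ∧ t.2.2 ≠ d t.1 t.2.1)).card = (k - 1) * n.choose 2 := by
  simp only [Finset.card_filter, Fintype.sum_prod_type]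
  have h2 : ∀ (i j : Fin n), (∑ l : Fin k, if i < j ∧ l ≠ d i j then 1 else 0)
      = if i < j then k - 1 else 0 := by
    intro i j
    by_cases hij : i < j
    · simp only [hij, true_and, if_true]
      rw [← Finset.card_filter]
      have : Finset.univ.filter (fun l : Fin k => l ≠ d i j) = {d i j}ᶜ := by
        ext l; simp
      rw [this, Finset.card_compl, Finset.card_singleton, Fintype.card_fin]
    · simp [hij]
  simp_rw [h2]
  rw [← sd_pair_count n, Finset.card_filter]
  simp only [Fintype.sum_prod_type]
  rw [Finset.mul_sum]
  congr 1; funext i; rw [Finset.mul_sum]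
  congr 1; funext j
  split <;> simp

/-- (a) if a placement satisfies, for each pair of points, the
type-I constraint at least in the dimension of the split separating the pair
(and every dimension separates at least one pair), then
`Err_I ≤ (k-1)/k`; and (b) the bound is tight: there is an instance (points,
placement, and per-pair separating dimensions with the SD guarantee) on which
exactly `C(n,2)` constraints are satisfied. -/
theorem sd_errI_bound_and_tightness (k : ℕ) (hk : 2 ≤ k) :
    (∀ (n : ℕ) (x : Fin n → Fin k → ℝ) (S : Fin n → Fin k → ℤ)
        (d : Fin n → Fin n → Fin k),
      (∀ i j, i ≠ j →
        (x i (d i j) < x j (d i j) → S i (d i j) < S j (d i j)) ∧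
        (x j (d i j) ≤ x i (d i j) → S j (d i j) ≤ S i (d i j))) →
      (∀ l : Fin k, ∃ i j, i ≠ j ∧ d i j = l) →
      ((Finset.univ.filter (fun t : Fin n × Fin n × Fin k =>
          t.1 < t.2.1 ∧
          ¬ ((x t.1 t.2.2 < x t.2.1 t.2.2 → S t.1 t.2.2 < S t.2.1 t.2.2) ∧
             (x t.2.1 t.2.2 ≤ x t.1 t.2.2 → S t.2.1 t.2.2 ≤ S t.1 t.2.2)))).card : ℚ)
          / (k * n.choose 2) ≤ (k - 1) / k) ∧
    (∃ (n : ℕ) (_ : 2 ≤ n) (x : Fin n → Fin k → ℝ) (S : Fin n → Fin k → ℤ)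
        (d : Fin n → Fin n → Fin k),
      (∀ i j, i ≠ j →
        (x i (d i j) < x j (d i j) → S i (d i j) < S j (d i j)) ∧
        (x j (d i j) ≤ x i (d i j) → S j (d i j) ≤ S i (d i j))) ∧
      (Finset.univ.filter (fun t : Fin n × Fin n × Fin k =>
          t.1 < t.2.1 ∧
          ((x t.1 t.2.2 < x t.2.1 t.2.2 → S t.1 t.2.2 < S t.2.1 t.2.2) ∧
           (x t.2.1 t.2.2 ≤ x t.1 t.2.2 → S t.2.1 t.2.2 ≤ S t.1 t.2.2)))).card
        = n.choose 2) := by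
  constructor
  · intro n x S d hsd _
    set V := Finset.univ.filter (fun t : Fin n × Fin n × Fin k =>
          t.1 < t.2.1 ∧
          ¬ ((x t.1 t.2.2 < x t.2.1 t.2.2 → S t.1 t.2.2 < S t.2.1 t.2.2) ∧
             (x t.2.1 t.2.2 ≤ x t.1 t.2.2 → S t.2.1 t.2.2 ≤ S t.1 t.2.2))) with hVdef
    have hsub : V ⊆ Finset.univ.filter (fun t : Fin n × Fin n × Fin k =>
        t.1 < t.2.1 ∧ t.2.2 ≠ d t.1 t.2.1) := by
      intro t ht
      rw [hVdef, Finset.mem_filter] at ht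
      rw [Finset.mem_filter]
      refine ⟨Finset.mem_univ _, ht.2.1, fun heq => ht.2.2 ?_⟩
      rw [heq]
      exact hsd t.1 t.2.1 ht.2.1.ne
    have hV : V.card ≤ (k - 1) * n.choose 2 :=
      (Finset.card_le_card hsub).trans_eq (sd_T_count n k d)
    have hkQ : (0:ℚ) < (k:ℚ) := by exact_mod_cast (by omega : 0 < k)
    by_cases hc : n.choose 2 = 0
    · rw [hc, Nat.mul_zero] at hV
      have h0 : V.card = 0 := by omega
      rw [h0]
      simp only [Nat.cast_zero, zero_div]
      apply div_nonneg _ (le_of_lt hkQ)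
      have : (1:ℚ) ≤ (k:ℚ) := by exact_mod_cast (by omega : 1 ≤ k)
      linarith
    · have hcQ : (0:ℚ) < (n.choose 2 : ℚ) := by
        exact_mod_cast Nat.pos_of_ne_zero hc
      rw [div_le_div_iff₀ (by positivity) hkQ]
      have hVQ : (V.card : ℚ) ≤ ((k:ℚ) - 1) * (n.choose 2 : ℚ) := by
        have h1 : ((k - 1 : ℕ) : ℚ) = (k:ℚ) - 1 := by
          rw [Nat.cast_sub (by omega)]; norm_num
        calc (V.card : ℚ) ≤ (((k-1) * n.choose 2 : ℕ) : ℚ) := by exact_mod_cast hV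
          _ = ((k:ℚ) - 1) * (n.choose 2 : ℚ) := by rw [Nat.cast_mul, h1]
      nlinarith
  · refine ⟨2, le_refl 2, fun i _ => ((i : ℕ) : ℝ),
      fun i l => if l = (⟨0, by omega⟩ : Fin k) then ((i : ℕ) : ℤ) else 0,
      fun _ _ => (⟨0, by omega⟩ : Fin k), ?_, ?_⟩
    · intro i j hij
      constructor <;> intro h <;> beta_reduce at h <;> simp only [if_pos rfl, if_true] <;> exact_mod_cast h
    · rw [show Nat.choose 2 2 = 1 from rfl, Finset.card_eq_one]
      refine ⟨((0 : Fin 2), (1 : Fin 2), (⟨0, by omega⟩ : Fin k)), ?_⟩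
      ext ⟨i, j, l⟩
      simp only [Finset.mem_filter, Finset.mem_univ, true_and, Finset.mem_singleton,
        Prod.mk.injEq]
      constructor
      · rintro ⟨hij, h1, h2⟩
        have hv : (i : ℕ) = 0 ∧ (j : ℕ) = 1 := by
          rw [Fin.lt_def] at hij
          omega
        have hi0 : i = 0 := Fin.ext (by simp [hv.1])
        have hj1 : j = 1 := Fin.ext (by simp [hv.2])
        subst hi0; subst hj1
        refine ⟨rfl, rfl, ?_⟩
        by_contra hl
        have := h1 (by norm_num)
        rw [if_neg hl, if_neg hl] at this
        exact lt_irrefl _ this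
      · rintro ⟨rfl, rfl, rfl⟩
        refine ⟨by decide, fun _ => by norm_num, fun h => ?_⟩
        norm_num at h
end
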